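/- arXiv:1711.00565 — 3 statements merged into one kernel-verified Lean document; each statement's English description precedes it below -/
import Mathlib

section
/- Let Ext: {0,1}^ℓ × {0,1}^d → {0,1}^s be a (k, ε)-extractor and f: {0,1}^s → V a function into a finite set V. Let δ = ε·|V|/2. Then the number of strings x ∈ {0,1}^ℓ for which the distributions f(U_s) and f(Ext(x, U_d)) are not δ-close in total variation distance is at most 2^{k+1}·|V|. -/
/-!
Fix a value `v ∈ V`. The test "`f(z) = v`" on `{0,1}^s` is fooled by the extractor: for every
source `X` of min-entropy `k`, the average over `x ∼ X` of `Pr[f(Ext(x, U_d)) = v] - Pr[f(U_s) = v]`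
is at most `ε` in absolute value. Taking for `X` the flat distribution on the set of `x` whose
deviation exceeds `ε` in a fixed direction shows that this set has fewer than `2^k` elements.
A string `x` for which `f(U_s)` and `f(Ext(x, U_d))` are more than `ε·|V|/2` apart must deviate by
more than `ε` at some `v`, so there are at most `|V| · 2 · 2^k` of them.
-/

open Finset

section MinEntropy

variable {α : Type*} [Fintype α]

def HasMinEntropyAtLeast (k : ℕ) (p : α → ℝ) : Prop :=
  (∀ x, 0 ≤ p x) ∧ ∑ x, p x = 1 ∧ ∀ x, p x ≤ ((2 : ℝ) ^ k)⁻¹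

lemma hasMinEntropyAtLeast_flat [DecidableEq α] {k : ℕ} {B : Finset α} (hB : 2 ^ k ≤ #B) :
    HasMinEntropyAtLeast k (fun x => if x ∈ B then (#B : ℝ)⁻¹ else 0) := by
  have hBpos : (0 : ℝ) < #B := by exact_mod_cast Nat.one_le_two_pow.trans hB
  refine ⟨fun x => by positivity, ?_, fun x => ?_⟩
  · rw [sum_ite_mem, univ_inter, sum_const, nsmul_eq_mul, mul_inv_cancel₀ hBpos.ne']
  · dsimp only
    split_ifs
    · exact inv_anti₀ (by positivity) (by exact_mod_cast hB)
    · positivity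

lemma card_filter_lt_lt_of_forall_sum_mul_le [DecidableEq α] {k : ℕ} {ε : ℝ} (T : α → ℝ)
    (hT : ∀ p, HasMinEntropyAtLeast k p → ∑ x, p x * T x ≤ ε) :
    #{x | ε < T x} < 2 ^ k := by
  set B : Finset α := {x | ε < T x}
  by_contra! hB
  have hBpos : (0 : ℝ) < #B := by exact_mod_cast Nat.one_le_two_pow.trans hB
  have hflat := hT _ (hasMinEntropyAtLeast_flat hB)
  have hsum : ∑ _x ∈ B, ε < ∑ x ∈ B, T x :=
    sum_lt_sum_of_nonempty (card_pos.mp (by exact_mod_cast hBpos)) fun x hx => (mem_filter.mp hx).2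
  rw [sum_const, nsmul_eq_mul] at hsum
  have hmean : ∑ x, (if x ∈ B then (#B : ℝ)⁻¹ else 0) * T x = (#B : ℝ)⁻¹ * ∑ x ∈ B, T x := by
    simp only [ite_mul, zero_mul, sum_ite_mem, univ_inter, mul_sum]
  rw [hmean, inv_mul_le_iff₀ hBpos] at hflat
  linarith

lemma card_filter_lt_abs_le_of_forall_abs_sum_mul_le [DecidableEq α] {k : ℕ} {ε : ℝ}
    (T : α → ℝ) (hT : ∀ p, HasMinEntropyAtLeast k p → |∑ x, p x * T x| ≤ ε) :
    #{x | ε < |T x|} ≤ 2 ^ (k + 1) := by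
  have hpos := card_filter_lt_lt_of_forall_sum_mul_le T fun p hp => (le_abs_self _).trans (hT p hp)
  have hneg := card_filter_lt_lt_of_forall_sum_mul_le (fun x => -T x) fun p hp => by
    simpa [mul_neg, sum_neg_distrib] using (neg_le_abs _).trans (hT p hp)
  have hsplit : #{x | ε < |T x|} ≤ #{x | ε < T x} + #{x | ε < -T x} := by
    simp only [lt_abs, filter_or]
    exact card_union_le _ _
  rw [pow_succ]
  omega

end MinEntropy

lemma abs_sum_sub_sum_le_half_sum_abs_sub {γ : Type*} [Fintype γ] [DecidableEq γ] {q u : γ → ℝ}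
    (h : ∑ z, q z = ∑ z, u z) (A : Finset γ) :
    |∑ z ∈ A, q z - ∑ z ∈ A, u z| ≤ (1 / 2) * ∑ z, |q z - u z| := by
  rw [← sum_sub_distrib]
  have hcompl : ∑ z ∈ A, (q z - u z) = -∑ z ∈ Aᶜ, (q z - u z) := by
    rw [eq_neg_iff_add_eq_zero, sum_add_sum_compl, sum_sub_distrib, h, sub_self]
  have hA := abs_sum_le_sum_abs (fun z => q z - u z) A
  have hAc := abs_sum_le_sum_abs (fun z => q z - u z) Aᶜ
  rw [← sum_add_sum_compl A (fun z => |q z - u z|)]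
  rw [hcompl, abs_neg] at hA ⊢
  linarith

section Extractor

variable {α β γ : Type*} [Fintype α] [Fintype β] [DecidableEq γ]

/-- The distribution of `Ext(X, Y)` for `X ∼ p` and a seed `Y` giving each value weight `w`. -/
def outputDist (Ext : α → β → γ) (w : ℝ) (p : α → ℝ) (z : γ) : ℝ :=
  ∑ x, ∑ y, p x * if Ext x y = z then w else 0

lemma sum_outputDist (Ext : α → β → γ) (w : ℝ) (p : α → ℝ) (A : Finset γ) :
    ∑ z ∈ A, outputDist Ext w p z = ∑ x, p x * ∑ y, if Ext x y ∈ A then w else 0 := by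
  simp only [outputDist, mul_sum]
  rw [sum_comm]
  refine sum_congr rfl fun x _ => ?_
  rw [sum_comm]
  refine sum_congr rfl fun y _ => ?_
  simp [sum_ite_eq]

lemma abs_sum_mul_fiber_sub_le [Fintype γ] {V : Type*} [DecidableEq V] (Ext : α → β → γ)
    (f : γ → V) (v : V) {w u ε : ℝ} (hw : Fintype.card β * w = 1) (hu : Fintype.card γ * u = 1)
    {p : α → ℝ} (hp : ∑ x, p x = 1)
    (hTV : (1 / 2) * ∑ z, |outputDist Ext w p z - u| ≤ ε) :
    |∑ x, p x * ((∑ y, if f (Ext x y) = v then w else 0) - ∑ z, if f z = v then u else 0)|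
      ≤ ε := by
  have htotal : ∑ z, outputDist Ext w p z = ∑ _z : γ, u := by
    simp [sum_outputDist, hp, hw, hu]
  have hfiber := abs_sum_sub_sum_le_half_sum_abs_sub htotal {z | f z = v}
  rw [sum_outputDist, sum_filter] at hfiber
  simp only [mem_filter, mem_univ, true_and] at hfiber
  simpa [mul_sub, sum_sub_distrib, ← sum_mul, hp] using hfiber.trans hTV

end Extractor

/-- Extractors are good samplers (Proposition, Zuckerman). -/
theorem stmt_0 (ℓ d s k : ℕ) (ε : ℝ) {V : Type} [Fintype V] [DecidableEq V]
    (Ext : (Fin ℓ → Bool) → (Fin d → Bool) → (Fin s → Bool))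
    (f : (Fin s → Bool) → V)
    -- `Ext` is a (k, ε)-extractor
    (hExt : ∀ p : (Fin ℓ → Bool) → ℝ,
      (∀ x, 0 ≤ p x) → (∑ x, p x) = 1 → (∀ x, p x ≤ ((2:ℝ)^k)⁻¹) →
      (1/2) * ∑ z : Fin s → Bool,
        |(∑ x, ∑ y : Fin d → Bool, p x * (if Ext x y = z then ((2:ℝ)^d)⁻¹ else 0))
          - ((2:ℝ)^s)⁻¹| ≤ ε) :
    -- the number of x for which f(U_s) and f(Ext(x, U_d)) are not (ε·|V|/2)-close
    Nat.card {x : Fin ℓ → Bool //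
      ¬ ((1/2) * ∑ v : V,
        |(∑ u : Fin s → Bool, if f u = v then ((2:ℝ)^s)⁻¹ else 0)
          - (∑ y : Fin d → Bool, if f (Ext x y) = v then ((2:ℝ)^d)⁻¹ else 0)|
          ≤ ε * (Fintype.card V) / 2)}
      ≤ 2^(k+1) * Fintype.card V := by
  set Q : V → ℝ := fun v => ∑ u : Fin s → Bool, if f u = v then ((2:ℝ)^s)⁻¹ else 0
  set P : (Fin ℓ → Bool) → V → ℝ :=
    fun x v => ∑ y : Fin d → Bool, if f (Ext x y) = v then ((2:ℝ)^d)⁻¹ else 0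
  have hfooled (v : V) (p : (Fin ℓ → Bool) → ℝ) (hp : HasMinEntropyAtLeast k p) :
      |∑ x, p x * (P x v - Q v)| ≤ ε :=
    abs_sum_mul_fiber_sub_le Ext f v (by simp) (by simp) hp.2.1 (hExt p hp.1 hp.2.1 hp.2.2)
  have hbad : ({x | ¬ (1/2) * ∑ v, |Q v - P x v| ≤ ε * Fintype.card V / 2} : Finset _)
      ⊆ univ.biUnion fun v => {x | ε < |P x v - Q v|} := by
    intro x hx
    obtain ⟨v, -, hv⟩ := exists_lt_of_sum_lt (s := univ) (f := fun _ => ε)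
      (g := fun v => |Q v - P x v|) (by simp at hx ⊢; linarith)
    exact mem_biUnion.2 ⟨v, mem_univ v, by simpa [abs_sub_comm] using hv⟩
  rw [Nat.card_eq_fintype_card, Fintype.card_subtype]
  refine (card_le_card hbad).trans ?_
  rw [mul_comm, ← card_univ]
  exact card_biUnion_le_card_mul _ _ _ fun v _ =>
    card_filter_lt_abs_le_of_forall_abs_sum_mul_le _ (hfooled v)
end

section
/- If M and M' are stochastic matrices of the same size such that for each row index i the probability distributions given by row i of M and row i of M' are γ-close in total variation distance, then for every r ∈ ℕ, each row of M^r is γ·r-close in total variation distance to the corresponding row of (M')^r. -/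
/-!
Write `M^(r+1) - M'^(r+1) = (M^r - M'^r) * M + (M'^r * M - M'^r * M')`. Right multiplication by
the stochastic matrix `M` does not increase the ℓ¹ norm of a row, and each row of `M'^r * (M - M')`
is a convex combination of rows of `M - M'`, so the ℓ¹ distance between corresponding rows grows
by at most `2γ` per step.
-/

open Finset Matrix

namespace Matrix

variable {n R : Type*} [Fintype n] [Ring R] [LinearOrder R] [IsStrictOrderedRing R]

lemma sum_abs_mul_apply_le {m p : Type*} [Fintype p] (A : Matrix m n R) (B : Matrix n p R)
    (i : m) :
    ∑ j, |(A * B) i j| ≤ ∑ k, |A i k| * ∑ j, |B k j| :=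
  calc ∑ j, |(A * B) i j|
      ≤ ∑ j, ∑ k, |A i k| * |B k j| := by
        gcongr with j
        simpa only [mul_apply, abs_mul] using abs_sum_le_sum_abs (fun k => A i k * B k j) univ
    _ = ∑ k, |A i k| * ∑ j, |B k j| := by
        rw [sum_comm]
        simp only [mul_sum]

variable [DecidableEq n]

lemma sum_abs_mul_apply_le_of_mem_rowStochastic {P : Matrix n n R}
    (hP : P ∈ rowStochastic R n) (A : Matrix n n R) (i : n) :
    ∑ j, |(A * P) i j| ≤ ∑ k, |A i k| := by
  refine (sum_abs_mul_apply_le A P i).trans_eq (sum_congr rfl fun k _ => ?_)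
  simp only [abs_of_nonneg (nonneg_of_mem_rowStochastic hP), sum_row_of_mem_rowStochastic hP,
    mul_one]

lemma sum_abs_mul_apply_sub_mul_apply_le {Q : Matrix n n R} (hQ : Q ∈ rowStochastic R n)
    {A B : Matrix n n R} {δ : R} (hδ : ∀ k, ∑ j, |A k j - B k j| ≤ δ) (i : n) :
    ∑ j, |(Q * A) i j - (Q * B) i j| ≤ δ :=
  calc ∑ j, |(Q * A) i j - (Q * B) i j|
      = ∑ j, |(Q * (A - B)) i j| := by simp only [Matrix.mul_sub, sub_apply]
    _ ≤ ∑ k, |Q i k| * ∑ j, |(A - B) k j| := sum_abs_mul_apply_le Q (A - B) i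
    _ ≤ ∑ k, Q i k * δ := by
        gcongr with k
        · exact nonneg_of_mem_rowStochastic hQ
        · rw [abs_of_nonneg (nonneg_of_mem_rowStochastic hQ)]
        · simpa only [sub_apply] using hδ k
    _ = δ := by rw [← sum_mul, sum_row_of_mem_rowStochastic hQ, one_mul]

lemma sum_abs_pow_apply_sub_pow_apply_le {M M' : Matrix n n R} (hM : M ∈ rowStochastic R n)
    (hM' : M' ∈ rowStochastic R n) {δ : R} (hδ : ∀ i, ∑ j, |M i j - M' i j| ≤ δ) (r : ℕ)
    (i : n) : ∑ j, |(M ^ r) i j - (M' ^ r) i j| ≤ r * δ := by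
  induction r generalizing i with
  | zero => simp
  | succ r ih =>
    have hsplit : ∀ j, (M ^ (r + 1)) i j - (M' ^ (r + 1)) i j =
        ((M ^ r - M' ^ r) * M) i j + ((M' ^ r * M) i j - (M' ^ r * M') i j) := by
      intro j
      simp only [pow_succ, Matrix.sub_mul, sub_apply]
      abel
    calc ∑ j, |(M ^ (r + 1)) i j - (M' ^ (r + 1)) i j|
        ≤ ∑ j, |((M ^ r - M' ^ r) * M) i j| + ∑ j, |(M' ^ r * M) i j - (M' ^ r * M') i j| := by
          simp only [hsplit, ← sum_add_distrib]
          exact sum_le_sum fun j _ => abs_add_le _ _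
      _ ≤ r * δ + δ := by
          gcongr
          · refine (sum_abs_mul_apply_le_of_mem_rowStochastic hM _ i).trans ?_
            simpa only [sub_apply] using ih i
          · exact sum_abs_mul_apply_sub_mul_apply_le (pow_mem hM' r) hδ i
      _ = (r + 1 : ℕ) * δ := by rw [Nat.cast_succ, add_mul, one_mul]

end Matrix

/-- If the rows of stochastic matrices `M` and `M'` are pairwise γ-close in total
variation distance, then the rows of `M^r` and `M'^r` are γ·r-close. -/
theorem stmt_1 {n : ℕ} (M M' : Matrix (Fin n) (Fin n) ℝ) (γ : ℝ)
    (hM0 : ∀ i j, 0 ≤ M i j) (hM1 : ∀ i, (∑ j, M i j) = 1)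
    (hM'0 : ∀ i j, 0 ≤ M' i j) (hM'1 : ∀ i, (∑ j, M' i j) = 1)
    (hclose : ∀ i, (1/2) * (∑ j, |M i j - M' i j|) ≤ γ) (r : ℕ) :
    ∀ i, (1/2) * (∑ j, |(M^r) i j - (M'^r) i j|) ≤ γ * r := by
  intro i
  have hl1 : ∀ k, ∑ j, |M k j - M' k j| ≤ 2 * γ := fun k => by linarith [hclose k]
  have := sum_abs_pow_apply_sub_pow_apply_le (mem_rowStochastic_iff_sum.mpr ⟨hM0, hM1⟩)
    (mem_rowStochastic_iff_sum.mpr ⟨hM'0, hM'1⟩) hl1 r i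
  linarith
end

section
/- Consider an S-R branching program P on {0,1}^n × {0,1}^m with sequential input access: along any computation path, consecutive queried input positions differ by at most 1. Partition the input positions into three contiguous blocks of sizes n_1, n_2, n_3 (each ≥ ⌊n/3⌋). Then the number of times a computation path of query complexity T transitions between querying a position in the first block and querying a position in the third block (in either order, with the other block queried in between) is at most T/n_2. Consequently P can be simulated by a 3-party NOF communication protocol (with the random string public) using O(T·S/n) bits of communication, where 2^S bounds the number of vertices of P. -/
/-!
Consecutive queried positions differ by at most one, so every passage between the first and the
third block costs at least `n₂` changes of the queried position; this is the crossing bound.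

For the protocol, the player seeing blocks 1–2 and the player seeing blocks 2–3 take turns: the
owner of the current vertex runs the program while it queries positions that owner sees, then
announces the vertex reached (`S` bits). Each announcement after the first is a crossing, so the
run ends within `T / n₂ + 2` rounds and its output bit is announced last. Whatever one player
says depends only on its own input and the messages so far, so the fibres of the transcript are
rectangles in `(x₁, x₃)` for fixed `x₂`, in particular cylinder intersections.
-/

/-- A deterministic 3-party number-on-forehead protocol with `c` bits of
communication (transcript/cylinder-intersection formulation). -/
def IsNOF3 {X1 X2 X3 : Type} (c : ℕ) (prot : X1 → X2 → X3 → Bool) : Prop :=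
  ∃ (τ : X1 → X2 → X3 → Fin (2^c)) (out : Fin (2^c) → Bool),
    (∀ x1 x2 x3, prot x1 x2 x3 = out (τ x1 x2 x3)) ∧
    ∀ t : Fin (2^c), ∃ (A : X2 → X3 → Prop) (B : X1 → X3 → Prop)
        (C : X1 → X2 → Prop),
      ∀ x1 x2 x3, τ x1 x2 x3 = t ↔ (A x2 x3 ∧ B x1 x3 ∧ C x1 x2)

/-- An S-R randomized branching program: sequential access to the input
(consecutive queried input positions differ by at most 1) and random access to
the random string. `next v b c` is the successor upon reading input bit `b` and
random bit `c`; `Sum.inr` values are outputs at terminal vertices. -/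
structure SRBP (n m : ℕ) where
  size : ℕ
  pos : Fin size → Fin n
  rnd : Fin size → Fin m
  next : Fin size → Bool → Bool → Fin size ⊕ Bool
  start : Fin size
  seq : ∀ v b c v', next v b c = Sum.inl v' →
    ((pos v' : ℤ) - (pos v : ℤ)).natAbs ≤ 1

/-- The state of the branching program after `k` steps on input `x` and random
string `y`. -/
def SRBP.state {n m : ℕ} (P : SRBP n m) (x : Fin n → Bool) (y : Fin m → Bool) :
    ℕ → Fin P.size ⊕ Bool
  | 0 => Sum.inl P.start
  | k+1 =>
    match P.state x y k with
    | Sum.inr b => Sum.inr b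
    | Sum.inl v => P.next v (x (P.pos v)) (y (P.rnd v))

/-- Gluing three input blocks into one input. -/
def glue (n1 n2 n3 : ℕ) (x1 : Fin n1 → Bool) (x2 : Fin n2 → Bool)
    (x3 : Fin n3 → Bool) : Fin (n1 + n2 + n3) → Bool := fun i =>
  if h : (i : ℕ) < n1 then x1 ⟨i, h⟩
  else if h2 : (i : ℕ) < n1 + n2 then x2 ⟨(i : ℕ) - n1, by omega⟩
  else x3 ⟨(i : ℕ) - n1 - n2, by have := i.isLt; omega⟩

open Finset

theorem abs_sub_le_sum_Ico {p w : ℕ → ℤ} {a b : ℕ} (hab : a ≤ b)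
    (h : ∀ k ∈ Ico a b, |p (k + 1) - p k| ≤ w k) : |p b - p a| ≤ ∑ k ∈ Ico a b, w k := by
  induction b, hab using Nat.le_induction with
  | base => simp
  | succ b hab ih =>
    rw [sum_Ico_succ_top hab]
    have hb : |p (b + 1) - p b| ≤ w b := h b (by simp; omega)
    have hrest := ih fun k hk => h k (by simp at hk ⊢; omega)
    calc |p (b + 1) - p a| ≤ |p (b + 1) - p b| + |p b - p a| := abs_sub_le _ _ _
      _ ≤ _ := by linarith

theorem sum_range_sum_Ico {M : Type*} [AddCommMonoid M] (w : ℕ → M) {s : ℕ → ℕ}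
    (hs : Monotone s) (r : ℕ) :
    ∑ i ∈ range r, ∑ k ∈ Ico (s i) (s (i + 1)), w k = ∑ k ∈ Ico (s 0) (s r), w k := by
  induction r with
  | zero => simp
  | succ r ih => rw [sum_range_succ, ih, sum_Ico_consecutive _ (hs r.zero_le) (hs r.le_succ)]

section OneSided

variable {X Z V W W' : Type*}

/-- For each `v`, the value `g x z v` is computed either by the player holding `x` or by the
player holding `z`. -/
def IsOneSided (g : X → Z → V → W) : Prop :=
  ∀ v, (∀ x z z', g x z v = g x z' v) ∨ ∀ x x' z, g x z v = g x' z v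

theorem IsOneSided.comp {g : X → Z → V → W} (hg : IsOneSided g) (φ : V → W → W') :
    IsOneSided fun x z v => φ v (g x z v) :=
  fun v => (hg v).imp (fun h x z z' => congrArg (φ v) (h x z z'))
    fun h x x' z => congrArg (φ v) (h x x' z)

theorem IsOneSided.iterate_eq {g : X → Z → V → V} (hg : IsOneSided g) (v₀ : V)
    {x x' : X} {z z' : Z} {k : ℕ} (h : ∀ i ≤ k, (g x' z)^[i] v₀ = (g x z')^[i] v₀) :
    ∀ i ≤ k, (g x z)^[i] v₀ = (g x z')^[i] v₀ := by
  intro i hi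
  induction i with
  | zero => rfl
  | succ i ih =>
    rw [Function.iterate_succ_apply', Function.iterate_succ_apply', ih (by omega)]
    rcases hg ((g x z')^[i] v₀) with hx | hz
    · exact hx x z z'
    · calc g x z ((g x z')^[i] v₀) = g x' z ((g x' z)^[i] v₀) := by rw [hz x x' z, h i (by omega)]
        _ = (g x z')^[i + 1] v₀ := by rw [← Function.iterate_succ_apply' (g x' z), h (i + 1) hi]
        _ = g x z' ((g x z')^[i] v₀) := Function.iterate_succ_apply' _ _ _

def transcript (g : X → Z → V → V) (h : X → Z → V → W) (v₀ : V) (H : ℕ) (x : X) (z : Z) :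
    (Fin H → V) × W :=
  (fun i => (g x z)^[i + 1] v₀, h x z ((g x z)^[H] v₀))

theorem transcript_eq_of_eq {g : X → Z → V → V} {h : X → Z → V → W} (hg : IsOneSided g)
    (hh : IsOneSided h) (v₀ : V) (H : ℕ) {x x' : X} {z z' : Z}
    (heq : transcript g h v₀ H x' z = transcript g h v₀ H x z') :
    transcript g h v₀ H x z = transcript g h v₀ H x z' := by
  have horbit : ∀ i ≤ H, (g x' z)^[i] v₀ = (g x z')^[i] v₀ := by
    rintro (_ | i) hi
    · rfl
    · exact congrFun (congrArg Prod.fst heq) ⟨i, hi⟩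
  have horbit' := hg.iterate_eq v₀ horbit
  refine Prod.ext (funext fun i => horbit' _ i.isLt) ?_
  have hanswer : h x' z ((g x' z)^[H] v₀) = h x z' ((g x z')^[H] v₀) := congrArg Prod.snd heq
  change h x z _ = h x z' _
  rw [horbit' H le_rfl]
  rcases hh ((g x z')^[H] v₀) with hx | hz
  · exact hx x z z'
  · rw [hz x x' z, ← hanswer, horbit H le_rfl]

end OneSided

theorem isNOF3_of_rectangle {X1 X2 X3 M : Type} [Fintype M] {c : ℕ}
    (hM : Fintype.card M ≤ 2 ^ c) (τ : X1 → X2 → X3 → M) (out : M → Bool)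
    {prot : X1 → X2 → X3 → Bool} (hprot : ∀ x1 x2 x3, prot x1 x2 x3 = out (τ x1 x2 x3))
    (hrect : ∀ x1 x1' x2 x3 x3', τ x1' x2 x3 = τ x1 x2 x3' → τ x1 x2 x3 = τ x1 x2 x3') :
    IsNOF3 c prot := by
  obtain ⟨e⟩ := Function.Embedding.nonempty_of_card_le (hM.trans (Fintype.card_fin _).ge)
  refine ⟨fun x1 x2 x3 => e (τ x1 x2 x3), Function.extend e out fun _ => false,
    fun x1 x2 x3 => by rw [hprot, e.injective.extend_apply], fun t =>
    ⟨fun x2 x3 => ∃ x1', e (τ x1' x2 x3) = t, fun _ _ => True,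
      fun x1 x2 => ∃ x3', e (τ x1 x2 x3') = t, fun x1 x2 x3 =>
      ⟨fun h => ⟨⟨x1, h⟩, trivial, x3, h⟩, ?_⟩⟩⟩
  rintro ⟨⟨x1', h1⟩, -, x3', h3⟩
  change e _ = t
  rw [hrect x1 x1' x2 x3 x3' (e.injective (h1.trans h3.symm)), h3]

namespace SRBP

variable {n m : ℕ} (P : SRBP n m) (x : Fin n → Bool) (y : Fin m → Bool)

def step : Fin P.size ⊕ Bool → Fin P.size ⊕ Bool
  | .inl v => P.next v (x (P.pos v)) (y (P.rnd v))
  | .inr β => .inr β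

theorem state_succ (k : ℕ) : P.state x y (k + 1) = P.step x y (P.state x y k) := by
  rw [state]
  cases P.state x y k <;> rfl

theorem state_add (t k : ℕ) : P.state x y (t + k) = (P.step x y)^[k] (P.state x y t) := by
  induction k with
  | zero => rfl
  | succ k ih => rw [← add_assoc, state_succ, ih, Function.iterate_succ_apply']

variable {P x y}

theorem state_eq_inr_of_le {t t' : ℕ} {β : Bool} (h : P.state x y t = .inr β) (ht : t ≤ t') :
    P.state x y t' = .inr β := by
  obtain ⟨k, rfl⟩ := Nat.exists_eq_add_of_le ht
  rw [state_add, h, Function.iterate_fixed rfl]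

theorem exists_state_eq_inl_of_le {t t' : ℕ} {v : Fin P.size} (h : P.state x y t' = .inl v)
    (ht : t ≤ t') : ∃ u, P.state x y t = .inl u := by
  cases hu : P.state x y t with
  | inl u => exact ⟨u, rfl⟩
  | inr β => rw [state_eq_inr_of_le hu ht] at h; cases h

theorem eq_of_state_eq_inl {K t t' : ℕ} {β : Bool} {v : Fin P.size}
    (hK : P.state x y K = .inr β) (ht : P.state x y t = .inl v)
    (ht' : P.state x y t' = .inl v) : t = t' := by
  wlog hlt : t < t' generalizing t t'
  · rcases (not_lt.1 hlt).lt_or_eq with h | h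
    · exact (this ht' ht h).symm
    · exact h.symm
  -- the run is periodic from time `t` on, so it never terminates
  have hperiodic : ∀ j, P.state x y (t + j * (t' - t)) = .inl v := by
    intro j
    induction j with
    | zero => simpa using ht
    | succ j ih =>
      rw [add_mul, one_mul, ← add_assoc, state_add, ih, ← ht, ← state_add,
        Nat.add_sub_cancel' hlt.le, ht', ht]
  have hK' : K ≤ t + K * (t' - t) := (Nat.le_mul_of_pos_right K (by omega)).trans le_add_self
  have := state_eq_inr_of_le hK hK'
  rw [hperiodic] at this
  cases this

variable (P x y)

def MovesAt (k : ℕ) : Prop :=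
  ∃ v v', P.state x y k = .inl v ∧ P.state x y (k + 1) = .inl v' ∧ P.pos v ≠ P.pos v'

variable {P x y}

open scoped Classical in
theorem abs_pos_sub_le_of_state {k : ℕ} {v v' : Fin P.size} (hv : P.state x y k = .inl v)
    (hv' : P.state x y (k + 1) = .inl v') :
    |((P.pos v' : ℕ) : ℤ) - (P.pos v : ℕ)| ≤ if P.MovesAt x y k then 1 else 0 := by
  split_ifs with hmoves
  · have hnext : P.next v (x (P.pos v)) (y (P.rnd v)) = .inl v' := by
      rw [← hv', state_succ, hv]; rfl
    rw [Int.abs_eq_natAbs]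
    exact_mod_cast P.seq v _ _ v' hnext
  · have : P.pos v = P.pos v' := by
      by_contra hne
      exact hmoves ⟨v, v', hv, hv', hne⟩
    simp [this]

/-- Each step moves the queried position by at most one, so a jump of length `d` between sampled
times needs `d` moves in between. -/
theorem mul_le_card_movesAt {K : ℕ} {β : Bool} (hK : P.state x y K = .inr β) {r d : ℕ}
    {s : ℕ → ℕ} (hs : Monotone s) {vs : ℕ → Fin P.size}
    (hst : ∀ i ≤ r, P.state x y (s i) = .inl (vs i))
    (hfar : ∀ i < r, (d : ℤ) ≤ |((P.pos (vs (i + 1)) : ℕ) : ℤ) - (P.pos (vs i) : ℕ)|) :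
    r * d ≤ Nat.card {k // P.MovesAt x y k} := by
  classical
  let posAt : ℕ → ℤ := fun k => (P.state x y k).elim (fun v => ((P.pos v : ℕ) : ℤ)) fun _ => 0
  let moves : ℕ → ℤ := fun k => if P.MovesAt x y k then 1 else 0
  have hjump : ∀ i < r, (d : ℤ) ≤ ∑ k ∈ Ico (s i) (s (i + 1)), moves k := by
    intro i hi
    have hend := hst (i + 1) hi
    have hstep : ∀ k ∈ Ico (s i) (s (i + 1)), |posAt (k + 1) - posAt k| ≤ moves k := by
      intro k hk
      simp only [mem_Ico] at hk
      obtain ⟨v, hv⟩ := exists_state_eq_inl_of_le hend (by omega : k ≤ s (i + 1))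
      obtain ⟨v', hv'⟩ := exists_state_eq_inl_of_le hend (by omega : k + 1 ≤ s (i + 1))
      simpa [posAt, hv, hv'] using abs_pos_sub_le_of_state hv hv'
    have hdisp := abs_sub_le_sum_Ico (hs (by omega : i ≤ i + 1)) hstep
    simp only [posAt, hend, hst i hi.le, Sum.elim_inl] at hdisp
    exact (hfar i hi).trans hdisp
  have hcount : (r * d : ℤ) ≤ ∑ k ∈ Ico (s 0) (s r), moves k := by
    rw [← sum_range_sum_Ico _ hs]
    simpa using sum_le_sum fun i hi => hjump i (mem_range.1 hi)
  simp only [moves, sum_boole] at hcount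
  have hfinite : {k | P.MovesAt x y k}.Finite := (Set.finite_Iio K).subset fun k hk => by
    obtain ⟨v, -, hv, -⟩ := hk
    by_contra hkK
    rw [state_eq_inr_of_le hK (not_lt.1 hkK)] at hv
    cases hv
  have hsub : ((({k ∈ Ico (s 0) (s r) | P.MovesAt x y k} : Finset ℕ)) : Set ℕ) ⊆
      {k | P.MovesAt x y k} := fun k hk => (mem_filter.1 hk).2
  have hle := Set.ncard_le_ncard hsub hfinite
  rw [Set.ncard_coe_finset] at hle
  exact (show r * d ≤ _ by exact_mod_cast hcount).trans hle

variable (P x y)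

open Classical in
noncomputable def stepWithin (home : Set (Fin n)) : Fin P.size ⊕ Bool → Fin P.size ⊕ Bool
  | .inl v => if P.pos v ∈ home then P.step x y (.inl v) else .inl v
  | .inr β => .inr β

/-- The player seeing the positions `< b` owns the vertices querying such a position and the
player seeing the positions `≥ a` owns the others; each simulates the run while it stays in the
positions it sees. -/
def home (a b : ℕ) (v : Fin P.size) : Set (Fin n) :=
  if (P.pos v : ℕ) < b then {i | (i : ℕ) < b} else {i | a ≤ (i : ℕ)}

noncomputable def round (a b N : ℕ) (v : Fin P.size) : Fin P.size ⊕ Bool :=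
  (P.stepWithin x y (P.home a b v))^[N] (.inl v)

/-- Announcing the starting vertex again once the run has ended keeps every message a vertex. -/
noncomputable def advance (a b N : ℕ) (v : Fin P.size) : Fin P.size :=
  (P.round x y a b N v).elim id fun _ => v

noncomputable def outcome (a b N : ℕ) (v : Fin P.size) : Bool :=
  (P.round x y a b N v).elim (fun _ => false) id

noncomputable def rounds (a b N i : ℕ) : Fin P.size :=
  (P.advance x y a b N)^[i] P.start

variable {P x y}

theorem stepWithin_congr {x' : Fin n → Bool} {home : Set (Fin n)}
    (h : ∀ i ∈ home, x i = x' i) : P.stepWithin x y home = P.stepWithin x' y home := by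
  funext s
  cases s with
  | inl v => by_cases hv : P.pos v ∈ home <;> simp [stepWithin, step, hv, h _]
  | inr β => rfl

theorem round_congr {x' : Fin n → Bool} {a b N : ℕ} {v : Fin P.size}
    (h : ∀ i ∈ P.home a b v, x i = x' i) : P.round x y a b N v = P.round x' y a b N v := by
  rw [round, round, stepWithin_congr h]

theorem stepWithin_eq_or (home : Set (Fin n)) (s : Fin P.size ⊕ Bool) :
    P.stepWithin x y home s = s ∨ P.stepWithin x y home s = P.step x y s := by
  cases s with
  | inl v => by_cases hv : P.pos v ∈ home <;> simp [stepWithin, hv]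
  | inr β => exact .inl rfl

theorem iterate_stepWithin_state (home : Set (Fin n)) (t d : ℕ) :
    ∃ t', t ≤ t' ∧ (P.stepWithin x y home)^[d] (P.state x y t) = P.state x y t' ∧
      (t' = t + d ∨ Function.IsFixedPt (P.stepWithin x y home) (P.state x y t')) := by
  induction d with
  | zero => exact ⟨t, le_rfl, rfl, .inl rfl⟩
  | succ d ih =>
    obtain ⟨t', ht', heq, hcase⟩ := ih
    rw [Function.iterate_succ_apply', heq]
    rcases stepWithin_eq_or home (P.state x y t') with hfix | hstep
    · exact ⟨t', ht', hfix, .inr hfix⟩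
    · rcases hcase with rfl | hfix
      · exact ⟨t + d + 1, by omega, by rw [hstep, state_succ], .inl rfl⟩
      · exact ⟨t', ht', hfix, .inr hfix⟩

theorem round_state {a b N t : ℕ} {β : Bool} {v : Fin P.size}
    (hN : P.state x y N = .inr β) (ht : P.state x y t = .inl v) :
    ∃ t', t ≤ t' ∧ P.round x y a b N v = P.state x y t' ∧
      ∀ u, P.state x y t' = .inl u → P.pos u ∉ P.home a b v := by
  obtain ⟨t', htt', heq, hcase⟩ := iterate_stepWithin_state (x := x) (y := y) (P.home a b v) t N
  refine ⟨t', htt', by rw [round, ← ht, heq], fun u hu hmem => ?_⟩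
  rcases hcase with rfl | hfix
  · rw [state_eq_inr_of_le hN (by omega : N ≤ t + N)] at hu
    cases hu
  · -- inside the home, a fixed point of `stepWithin` is a self-loop of the run
    have hwithin : P.stepWithin x y (P.home a b v) (.inl u) = P.step x y (.inl u) := by
      simp [stepWithin, hmem]
    have hstall : P.state x y (t' + 1) = .inl u :=
      calc P.state x y (t' + 1) = P.stepWithin x y (P.home a b v) (P.state x y t') := by
            rw [state_succ, hu, hwithin]
        _ = .inl u := by rw [hfix.eq, hu]
    exact absurd (eq_of_state_eq_inl hN hu hstall) (by omega)

theorem rounds_succ (a b N i : ℕ) :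
    P.rounds x y a b N (i + 1) = P.advance x y a b N (P.rounds x y a b N i) :=
  Function.iterate_succ_apply' _ _ _

theorem exists_state_eq_rounds {a b N : ℕ} {β : Bool} (hN : P.state x y N = .inr β) (i : ℕ) :
    ∃ t, P.state x y t = .inl (P.rounds x y a b N i) := by
  induction i with
  | zero => exact ⟨0, rfl⟩
  | succ i ih =>
    obtain ⟨t, ht⟩ := ih
    obtain ⟨t', -, hround, -⟩ := round_state (a := a) (b := b) hN ht
    rw [rounds_succ, advance]
    cases hr : P.round x y a b N (P.rounds x y a b N i) with
    | inl u => exact ⟨t', by rw [← hround, hr]; rfl⟩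
    | inr _ => exact ⟨t, ht⟩

theorem le_abs_pos_sub {a b : ℕ} {u u' v : Fin P.size} (hu : P.pos u ∉ P.home a b v)
    (hu' : P.pos u' ∉ P.home a b u) :
    ((b - a : ℕ) : ℤ) ≤ |((P.pos u' : ℕ) : ℤ) - (P.pos u : ℕ)| := by
  simp only [home] at hu hu'
  split_ifs at hu hu' <;> simp only [Set.mem_ofPred_eq, not_lt, not_le] at hu hu' <;>
    rw [le_abs] <;> omega

theorem eq_of_state_eq_inr {t t' : ℕ} {β β' : Bool} (ht : P.state x y t = .inr β)
    (ht' : P.state x y t' = .inr β') : β = β' := by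
  rcases le_total t t' with h | h
  · exact Sum.inr.inj ((state_eq_inr_of_le ht h).symm.trans ht')
  · exact Sum.inr.inj (ht.symm.trans (state_eq_inr_of_le ht' h))

/-- Each unfinished round crosses from below `a` to `≥ b` or back, so if the first `H + 1` rounds
were all unfinished, the run would change its queried position `H * (b - a)` times. -/
theorem exists_le_round_eq_inr {a b N H : ℕ} {β : Bool} (hN : P.state x y N = .inr β)
    (hH : Nat.card {k // P.MovesAt x y k} < H * (b - a)) :
    ∃ j ≤ H, ∃ β', P.round x y a b N (P.rounds x y a b N j) = .inr β' := by
  by_contra! hunfinished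
  choose t ht using exists_state_eq_rounds (a := a) (b := b) hN
  have hnext : ∀ j ≤ H, P.pos (P.rounds x y a b N (j + 1)) ∉ P.home a b (P.rounds x y a b N j) ∧
      t j ≤ t (j + 1) := by
    intro j hj
    obtain ⟨t', htt', hround, hexit⟩ := round_state (a := a) (b := b) hN (ht j)
    cases hr : P.round x y a b N (P.rounds x y a b N j) with
    | inr β' => exact absurd hr (hunfinished j hj β')
    | inl u =>
      have hu : P.rounds x y a b N (j + 1) = u := by rw [rounds_succ, advance, hr]; rfl
      have hst : P.state x y t' = .inl u := hround ▸ hr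
      have := eq_of_state_eq_inl hN hst (hu ▸ ht (j + 1))
      exact ⟨hu ▸ hexit u hst, by omega⟩
  have hs : Monotone fun j => t (min j H + 1) := monotone_nat_of_le_succ fun j => by
    rcases lt_or_ge j H with hj | hj
    · simpa [min_eq_left hj.le, min_eq_left (Nat.succ_le_of_lt hj)] using (hnext (j + 1) hj).2
    · simp [min_eq_right hj, min_eq_right (hj.trans j.le_succ)]
  have := mul_le_card_movesAt hN hs (r := H) (d := b - a)
    (vs := fun j => P.rounds x y a b N (min j H + 1))
    (fun i hi => by simpa only [min_eq_left hi] using ht (i + 1))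
    fun i hi => by
      simpa only [min_eq_left hi.le, min_eq_left (Nat.succ_le_of_lt hi)] using
        le_abs_pos_sub (hnext i hi.le).1 (hnext (i + 1) hi).1
  omega

theorem outcome_rounds_eq {a b N H : ℕ} {β : Bool} (hN : P.state x y N = .inr β)
    (hH : Nat.card {k // P.MovesAt x y k} < H * (b - a)) :
    P.outcome x y a b N (P.rounds x y a b N H) = β := by
  obtain ⟨j, hjH, β', hj⟩ := exists_le_round_eq_inr hN hH
  have hβ' : β' = β := by
    obtain ⟨t, ht⟩ := exists_state_eq_rounds (a := a) (b := b) hN j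
    obtain ⟨t', -, hround, -⟩ := round_state (a := a) (b := b) hN ht
    exact eq_of_state_eq_inr (hround ▸ hj) hN
  have hstall : ∀ i, P.rounds x y a b N (j + i) = P.rounds x y a b N j := by
    intro i
    induction i with
    | zero => rfl
    | succ i ih => rw [← add_assoc, rounds_succ, ih, advance, hj]; rfl
  rw [outcome, ← Nat.add_sub_cancel' hjH, hstall, hj, hβ']
  rfl

end SRBP

theorem le_abs_sub_of_alternating {a b p q i : ℕ} {par : Bool}
    (hp : if decide (i % 2 = 0) = par then p < a else b ≤ p)
    (hq : if decide ((i + 1) % 2 = 0) = par then q < a else b ≤ q) :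
    ((b - a : ℕ) : ℤ) ≤ |(q : ℤ) - p| := by
  rw [le_abs]
  rcases Nat.mod_two_eq_zero_or_one i with hi | hi <;> cases par <;>
    simp [hi, Nat.succ_mod_two_eq_zero_iff] at hp hq <;> omega

theorem glue_eq_of_lt {n1 n2 n3 : ℕ} (x1 : Fin n1 → Bool) (x2 : Fin n2 → Bool)
    {x3 x3' : Fin n3 → Bool} {i : Fin (n1 + n2 + n3)} (h : (i : ℕ) < n1 + n2) :
    glue n1 n2 n3 x1 x2 x3 i = glue n1 n2 n3 x1 x2 x3' i := by
  unfold glue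
  split_ifs <;> rfl

theorem glue_eq_of_le {n1 n2 n3 : ℕ} {x1 x1' : Fin n1 → Bool} (x2 : Fin n2 → Bool)
    (x3 : Fin n3 → Bool) {i : Fin (n1 + n2 + n3)} (h : n1 ≤ (i : ℕ)) :
    glue n1 n2 n3 x1 x2 x3 i = glue n1 n2 n3 x1' x2 x3 i := by
  unfold glue
  split_ifs <;> first | rfl | omega

theorem SRBP.isOneSided_round_glue {n1 n2 n3 m : ℕ} (P : SRBP (n1 + n2 + n3) m)
    (x2 : Fin n2 → Bool) (y : Fin m → Bool) (N : ℕ) :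
    IsOneSided fun (x1 : Fin n1 → Bool) (x3 : Fin n3 → Bool) =>
      P.round (glue n1 n2 n3 x1 x2 x3) y n1 (n1 + n2) N := by
  intro v
  by_cases hv : (P.pos v : ℕ) < n1 + n2
  · exact .inl fun x1 x3 x3' => SRBP.round_congr fun i hi =>
      glue_eq_of_lt x1 x2 (by simpa [SRBP.home, hv] using hi)
  · exact .inr fun x1 x1' x3 => SRBP.round_congr fun i hi =>
      glue_eq_of_le x2 x3 (by simpa [SRBP.home, hv] using hi)

theorem SRBP.isNOF3_glue {n1 n2 n3 m S H N : ℕ} (P : SRBP (n1 + n2 + n3) m)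
    (hsize : P.size ≤ 2 ^ S) (y : Fin m → Bool) (f : (Fin (n1 + n2 + n3) → Bool) → Bool)
    (hN : ∀ x, P.state x y N = .inr (f x))
    (hH : ∀ x, Nat.card {k // P.MovesAt x y k} < H * n2) :
    IsNOF3 (S * H + 1) fun x1 x2 x3 => f (glue n1 n2 n3 x1 x2 x3) := by
  have hcard : Fintype.card ((Fin H → Fin P.size) × Bool) ≤ 2 ^ (S * H + 1) := by
    simp only [Fintype.card_prod, Fintype.card_fun, Fintype.card_fin, Fintype.card_bool,
      pow_succ, pow_mul]
    exact Nat.mul_le_mul_right 2 (Nat.pow_le_pow_left hsize H)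
  have hround := fun x2 => P.isOneSided_round_glue x2 y N
  exact isNOF3_of_rectangle hcard
    (fun x1 x2 x3 => transcript (fun x1 x3 => P.advance (glue n1 n2 n3 x1 x2 x3) y n1 (n1 + n2) N)
      (fun x1 x3 => P.outcome (glue n1 n2 n3 x1 x2 x3) y n1 (n1 + n2) N) P.start H x1 x3)
    Prod.snd
    (fun x1 x2 x3 =>
      (SRBP.outcome_rounds_eq (hN _) (by rw [Nat.add_sub_cancel_left]; exact hH _)).symm)
    fun x1 x1' x2 x3 x3' => transcript_eq_of_eq
      ((hround x2).comp fun v r => r.elim id fun _ => v)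
      ((hround x2).comp fun _ r => r.elim (fun _ => false) id) P.start H

theorem stmt_14_general (n1 n2 n3 m S T : ℕ) (hS : 1 ≤ S) (hn2 : 0 < n2)
    (P : SRBP (n1 + n2 + n3) m) (hsize : P.size ≤ 2^S)
    (f : (Fin (n1 + n2 + n3) → Bool) → (Fin m → Bool) → Bool)
    (hf : ∀ x y, ∃ k, P.state x y k = Sum.inr (f x y))
    -- query complexity at most T: at most T−1 steps query a new input position
    (hquery : ∀ x y, Nat.card {k : ℕ // ∃ v v', P.state x y k = Sum.inl v ∧
        P.state x y (k+1) = Sum.inl v' ∧ P.pos v ≠ P.pos v'} + 1 ≤ T) :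
    -- (1) crossing bound
    (∀ (x : Fin (n1 + n2 + n3) → Bool) (y : Fin m → Bool) (r : ℕ) (s : ℕ → ℕ)
        (vs : ℕ → Fin P.size) (par : Bool),
      StrictMono s →
      (∀ i ≤ r, P.state x y (s i) = Sum.inl (vs i)) →
      (∀ i ≤ r, if (decide (i % 2 = 0)) = par
        then (P.pos (vs i) : ℕ) < n1
        else n1 + n2 ≤ (P.pos (vs i) : ℕ)) →
      r ≤ T / n2) ∧
    -- (2) NOF simulation with O(T·S/n) communication
    ∃ (c : ℕ) (prot : (Fin m → Bool) → (Fin n1 → Bool) → (Fin n2 → Bool) →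
        (Fin n3 → Bool) → Bool),
      (∀ y, IsNOF3 c (prot y)) ∧
      (∀ y x1 x2 x3, prot y x1 x2 x3 = f (glue n1 n2 n3 x1 x2 x3) y) ∧
      (c : ℝ) ≤ (S : ℝ) * ((T : ℝ) / (n2 : ℝ) + 2) := by
  refine ⟨fun x y r s vs par hs hst hpat => ?_, ?_⟩
  · obtain ⟨K, hK⟩ := hf x y
    have hcross := SRBP.mul_le_card_movesAt hK hs.monotone hst fun i hi =>
      le_abs_sub_of_alternating (hpat i hi.le) (hpat (i + 1) hi)
    have hT : Nat.card {k // P.MovesAt x y k} + 1 ≤ T := hquery x y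
    rw [Nat.add_sub_cancel_left] at hcross
    rw [Nat.le_div_iff_mul_le hn2]
    omega
  refine ⟨S * (T / n2 + 1) + 1, fun y x1 x2 x3 => f (glue n1 n2 n3 x1 x2 x3) y, fun y => ?_,
    fun _ _ _ _ => rfl, ?_⟩
  · have hN x : P.state x y (univ.sup fun x => Nat.find (hf x y)) = .inr (f x y) :=
      SRBP.state_eq_inr_of_le (Nat.find_spec (hf x y))
        (le_sup (f := fun x => Nat.find (hf x y)) (mem_univ x))
    refine P.isNOF3_glue hsize y (f · y) hN fun x => ?_
    have hT : Nat.card {k // P.MovesAt x y k} + 1 ≤ T := hquery x y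
    have := Nat.lt_div_mul_add (a := T) hn2
    rw [add_mul, one_mul]
    omega
  · have hdiv : ((T / n2 : ℕ) : ℝ) ≤ (T : ℝ) / n2 := Nat.cast_div_le
    have hS' : (1 : ℝ) ≤ S := by exact_mod_cast hS
    push_cast
    nlinarith

/-- An S-R branching program of size `≤ 2^S` and query complexity `≤ T`, with the
input split into three contiguous blocks of sizes `n1, n2, n3` (each `≥ ⌊n/3⌋`):
(1) along any computation path, the number of alternations between querying the
first block and querying the third block is at most `T / n2`; and (2) the program
is simulated by a 3-party NOF protocol (with public random string) using
`O(T·S/n)` bits of communication. -/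
theorem stmt_14 (n1 n2 n3 m S T : ℕ) (hS : 1 ≤ S) (hn2 : 0 < n2)
    (h1 : (n1 + n2 + n3) / 3 ≤ n1) (h2 : (n1 + n2 + n3) / 3 ≤ n2)
    (h3 : (n1 + n2 + n3) / 3 ≤ n3)
    (P : SRBP (n1 + n2 + n3) m) (hsize : P.size ≤ 2^S)
    (f : (Fin (n1 + n2 + n3) → Bool) → (Fin m → Bool) → Bool)
    (hf : ∀ x y, ∃ k, P.state x y k = Sum.inr (f x y))
    -- query complexity at most T: at most T−1 steps query a new input position
    (hquery : ∀ x y, Nat.card {k : ℕ // ∃ v v', P.state x y k = Sum.inl v ∧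
        P.state x y (k+1) = Sum.inl v' ∧ P.pos v ≠ P.pos v'} + 1 ≤ T) :
    -- (1) crossing bound
    (∀ (x : Fin (n1 + n2 + n3) → Bool) (y : Fin m → Bool) (r : ℕ) (s : ℕ → ℕ)
        (vs : ℕ → Fin P.size) (par : Bool),
      StrictMono s →
      (∀ i ≤ r, P.state x y (s i) = Sum.inl (vs i)) →
      (∀ i ≤ r, if (decide (i % 2 = 0)) = par
        then (P.pos (vs i) : ℕ) < n1
        else n1 + n2 ≤ (P.pos (vs i) : ℕ)) →
      r ≤ T / n2) ∧
    -- (2) NOF simulation with O(T·S/n) communication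
    ∃ (c : ℕ) (prot : (Fin m → Bool) → (Fin n1 → Bool) → (Fin n2 → Bool) →
        (Fin n3 → Bool) → Bool),
      (∀ y, IsNOF3 c (prot y)) ∧
      (∀ y x1 x2 x3, prot y x1 x2 x3 = f (glue n1 n2 n3 x1 x2 x3) y) ∧
      (c : ℝ) ≤ (S : ℝ) * ((T : ℝ) / (n2 : ℝ) + 2) :=
  stmt_14_general n1 n2 n3 m S T hS hn2 P hsize f hf hquery
end
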